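/- For every n ≥ 2, f_{n-1}(K_n) = ⌊n/2⌋: there exists an (n-1)-edge-coloring of K_n in which every color class has at least ⌊n/2⌋ components, and no coloring can do better. -/

import Mathlib

/-- The simple graph on `Fin n` induced by the color class `i` of the edge
coloring `c` of the complete graph `K_n`. -/
def colorClass {n k : ℕ} (c : Sym2 (Fin n) → Fin k) (i : Fin k) :
    SimpleGraph (Fin n) where
  Adj u v := u ≠ v ∧ c s(u, v) = i
  symm := by
    constructor
    intro u v h
    exact ⟨h.1.symm, by rw [Sym2.eq_swap]; exact h.2⟩
  loopless := by
    constructor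
    intro u h
    exact h.1 rfl

/-- The number of connected components containing at least one edge. -/
noncomputable def numEdgeComps {n : ℕ} (G : SimpleGraph (Fin n)) : ℕ :=
  Nat.card {C : G.ConnectedComponent //
    ∃ u v : Fin n, G.Adj u v ∧ G.connectedComponentMk u = C}

/-- Color `i` is used on some edge of `K_n`. -/
def usedColor {n k : ℕ} (c : Sym2 (Fin n) → Fin k) (i : Fin k) : Prop :=
  ∃ u v : Fin n, u ≠ v ∧ c s(u, v) = i

/-- The minimum, over used colors, of the number of components of the
corresponding color class. -/
noncomputable def minComps {n k : ℕ} (c : Sym2 (Fin n) → Fin k) : ℕ :=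
  sInf ((fun i => numEdgeComps (colorClass c i)) '' {i | usedColor c i})

/-- `f_k(K_n)`: the maximum over `k`-edge-colorings of `K_n` of the minimum,
over used colors, of the number of components of the color class. -/
noncomputable def fGraph (n k : ℕ) : ℕ :=
  sSup (Set.range fun c : Sym2 (Fin n) → Fin k => minComps c)

/-!
A component carrying an edge has at least two vertices, so no color class has more than `⌊n/2⌋`
of them. For the lower bound, view the vertices of `K_n` as `ℤ/(n-1)` together with a point `∞`,
and color `{a, b}` by `a + b` and `{∞, a}` by `2a`. In the class of color `j` the involution
`a ↦ j - a` pairs the residues it moves into single-edge components, and its fixed points, the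
at most two solutions of `2a = j` in the cyclic group `ℤ/(n-1)`, join `∞` in one more component.
So every class has at least `⌈(n-1)/2⌉ = ⌊n/2⌋` components.
-/

open Finset

section EdgeComponents

variable {n : ℕ} {β : Type*}

theorem SimpleGraph.Walk.apply_eq_of_forall_adj {V : Type*} {G : SimpleGraph V} {φ : V → β}
    (hφ : ∀ u v, G.Adj u v → φ u = φ v) {u v : V} (p : G.Walk u v) : φ u = φ v := by
  induction p with
  | nil => rfl
  | cons h _ ih => exact (hφ _ _ h).trans ih

open Classical in
theorem numEdgeComps_eq_card_image (G : SimpleGraph (Fin n)) :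
    numEdgeComps G = #(({v | ∃ w, G.Adj v w} : Finset (Fin n)).image G.connectedComponentMk) := by
  rw [numEdgeComps, ← Fintype.card_coe, ← Nat.card_eq_fintype_card]
  refine Nat.card_congr (Equiv.subtypeEquivRight fun C => ?_)
  simp

theorem two_mul_numEdgeComps_le (G : SimpleGraph (Fin n)) : 2 * numEdgeComps G ≤ n := by
  classical
  rw [numEdgeComps_eq_card_image]
  refine (mul_card_image_le_card _ 2 ?_).trans (card_le_univ _ |>.trans_eq (Fintype.card_fin n))
  intro C hC
  obtain ⟨v, hv, rfl⟩ := mem_image.1 hC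
  obtain ⟨w, hvw⟩ := (mem_filter.1 hv).2
  calc 2 = #{v, w} := (card_pair hvw.ne).symm
    _ ≤ _ := card_le_card <| by
      simpa [insert_subset_iff] using ⟨⟨w, hvw⟩, ⟨v, hvw.symm⟩, hvw.symm.reachable⟩

theorem card_image_le_numEdgeComps [DecidableEq β] (G : SimpleGraph (Fin n)) {φ : Fin n → β}
    (hφ : ∀ u v, G.Adj u v → φ u = φ v) {s : Finset (Fin n)} (hs : ∀ v ∈ s, ∃ w, G.Adj v w) :
    #(s.image φ) ≤ numEdgeComps G := by
  classical
  let φ' := SimpleGraph.ConnectedComponent.lift (G := G) φ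
    fun _ _ p _ => p.apply_eq_of_forall_adj hφ
  rw [numEdgeComps_eq_card_image]
  calc #(s.image φ) = #((s.image G.connectedComponentMk).image φ') := by rw [image_image]; rfl
    _ ≤ #(s.image G.connectedComponentMk) := card_image_le
    _ ≤ _ := card_le_card <| image_subset_image fun v hv => mem_filter.2 ⟨mem_univ v, hs v hv⟩

end EdgeComponents

section Extremal

variable {n k : ℕ}

theorem exists_usedColor (hn : 2 ≤ n) (c : Sym2 (Fin n) → Fin k) : ∃ i, usedColor c i :=
  ⟨_, ⟨0, by omega⟩, ⟨1, by omega⟩, by simp, rfl⟩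

theorem minComps_le_half (hn : 2 ≤ n) (c : Sym2 (Fin n) → Fin k) : minComps c ≤ n / 2 := by
  obtain ⟨i, hi⟩ := exists_usedColor hn c
  have := two_mul_numEdgeComps_le (colorClass c i)
  exact (Nat.sInf_le (Set.mem_image_of_mem (fun i => numEdgeComps (colorClass c i)) hi)).trans
    (by omega)

theorem le_minComps (hn : 2 ≤ n) {c : Sym2 (Fin n) → Fin k} {m : ℕ}
    (h : ∀ i, usedColor c i → m ≤ numEdgeComps (colorClass c i)) : m ≤ minComps c := by
  obtain ⟨i, hi⟩ := exists_usedColor hn c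
  refine le_csInf ⟨_, i, hi, rfl⟩ ?_
  rintro _ ⟨j, hj, rfl⟩
  exact h j hj

theorem fGraph_eq_half (hn : 2 ≤ n) {c : Sym2 (Fin n) → Fin k}
    (hc : ∀ i, n / 2 ≤ numEdgeComps (colorClass c i)) : fGraph n k = n / 2 := by
  have hbdd : ∀ m ∈ Set.range fun c : Sym2 (Fin n) → Fin k => minComps c, m ≤ n / 2 := by
    rintro _ ⟨c', rfl⟩
    exact minComps_le_half hn c'
  refine le_antisymm (csSup_le ⟨_, c, rfl⟩ hbdd) ?_
  exact (le_minComps hn fun i _ => hc i).trans (le_csSup ⟨_, hbdd⟩ ⟨c, rfl⟩)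

end Extremal

section PairColoring

variable {A : Type*} [AddCommGroup A]

/-- The coloring of the complete graph on `Option A` in which `none` plays a vertex `∞`. -/
def pairColor : Option A → Option A → A
  | some a, some b => a + b
  | some a, none => 2 • a
  | none, some b => 2 • b
  | none, none => 0

theorem pairColor_comm (x y : Option A) : pairColor x y = pairColor y x := by
  cases x <;> cases y <;> simp [pairColor, add_comm]

variable [DecidableEq A]

/-- Labels the component of a vertex in the class of color `j`: the pair `{a, j - a}`, or `none`
for `∞` and the fixed points of `a ↦ j - a`. -/
def pairInvariant (j : A) : Option A → Option (Sym2 A)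
  | none => none
  | some a => if 2 • a = j then none else some s(a, j - a)

theorem pairInvariant_eq_of_pairColor_eq {j : A} {x y : Option A} (hxy : x ≠ y)
    (h : pairColor x y = j) : pairInvariant j x = pairInvariant j y := by
  match x, y with
  | some a, some b =>
    have hab : a ≠ b := fun hab => hxy (congrArg some hab)
    obtain rfl : a + b = j := h
    have ha : 2 • a ≠ a + b := by rwa [two_nsmul, Ne, add_right_inj]
    have hb : 2 • b ≠ a + b := by rwa [two_nsmul, Ne, add_left_inj, eq_comm]
    simp [pairInvariant, ha, hb, Sym2.eq_swap]
  | some a, none => simp [pairInvariant, ← h, pairColor]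
  | none, some b => simp [pairInvariant, ← h, pairColor]
  | none, none => exact absurd rfl hxy

theorem exists_pairColor_eq (j a : A) : ∃ y, some a ≠ y ∧ pairColor (some a) y = j := by
  by_cases h : 2 • a = j
  · exact ⟨none, by simp, h⟩
  · refine ⟨some (j - a), fun ha => h ?_, add_sub_cancel a j⟩
    calc 2 • a = a + (j - a) := by rw [two_nsmul, ← Option.some_inj.1 ha]
      _ = j := add_sub_cancel a j

variable [Fintype A] [IsAddCyclic A]

theorem card_two_nsmul_eq_le (j : A) : #{b : A | 2 • b = j} ≤ 2 := by
  by_cases h : ∃ a, 2 • a = j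
  · obtain ⟨a, rfl⟩ := h
    calc #{b : A | 2 • b = 2 • a} ≤ #{b : A | 2 • b = 0} :=
          card_le_card_of_injOn (· - a) (fun b hb => by simp_all [nsmul_sub])
            fun _ _ _ _ => sub_left_inj.1
      _ ≤ 2 := by convert IsAddCyclic.card_nsmul_eq_zero_le (α := A) two_pos
  · simp_all

theorem card_filter_pairInvariant_eq_le (j a : A) :
    #{b | pairInvariant j (some b) = pairInvariant j (some a)} ≤ 2 := by
  by_cases ha : 2 • a = j
  · convert card_two_nsmul_eq_le j using 3
    simp [pairInvariant, ha]
  · refine (card_le_card (t := {a, j - a}) fun b hb => ?_).trans card_le_two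
    simp only [pairInvariant, ha, mem_filter, mem_univ, true_and] at hb
    simp only [mem_insert, mem_singleton]
    aesop

theorem card_le_two_mul_card_image_pairInvariant (j : A) :
    Fintype.card A ≤ 2 * #(univ.image fun a => pairInvariant j (some a)) := by
  refine card_le_mul_card_image univ 2 fun _ hb => ?_
  obtain ⟨a, -, rfl⟩ := mem_image.1 hb
  exact card_filter_pairInvariant_eq_le j a

end PairColoring

section CyclicColoring

variable {n k : ℕ} {A : Type*} [AddCommGroup A]

def cyclicColoring (e : Fin n ≃ Option A) (f : Fin k ≃ A) : Sym2 (Fin n) → Fin k :=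
  Sym2.lift ⟨fun u v => f.symm (pairColor (e u) (e v)), fun u v => by simp only [pairColor_comm]⟩

theorem colorClass_cyclicColoring_adj {e : Fin n ≃ Option A} {f : Fin k ≃ A} {i : Fin k}
    {u v : Fin n} :
    (colorClass (cyclicColoring e f) i).Adj u v ↔ e u ≠ e v ∧ pairColor (e u) (e v) = f i := by
  show u ≠ v ∧ f.symm (pairColor (e u) (e v)) = i ↔ _
  rw [e.injective.ne_iff, Equiv.symm_apply_eq]

theorem card_le_two_mul_numEdgeComps_cyclicColoring [Fintype A] [IsAddCyclic A]
    (e : Fin n ≃ Option A) (f : Fin k ≃ A) (i : Fin k) :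
    Fintype.card A ≤ 2 * numEdgeComps (colorClass (cyclicColoring e f) i) := by
  classical
  set G := colorClass (cyclicColoring e f) i
  have hφ : ∀ u v, G.Adj u v → pairInvariant (f i) (e u) = pairInvariant (f i) (e v) :=
    fun u v huv => pairInvariant_eq_of_pairColor_eq (colorClass_cyclicColoring_adj.1 huv).1
      (colorClass_cyclicColoring_adj.1 huv).2
  have hs : ∀ v ∈ univ.image fun a => e.symm (some a), ∃ w, G.Adj v w := by
    simp only [mem_image, mem_univ, true_and, forall_exists_index, forall_apply_eq_imp_iff]
    intro a
    obtain ⟨y, hy, hay⟩ := exists_pairColor_eq (f i) a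
    exact ⟨e.symm y, colorClass_cyclicColoring_adj.2 (by simpa using ⟨hy, hay⟩)⟩
  calc Fintype.card A ≤ 2 * #(univ.image fun a => pairInvariant (f i) (some a)) :=
        card_le_two_mul_card_image_pairInvariant _
    _ = 2 * #((univ.image fun a => e.symm (some a)).image fun v => pairInvariant (f i) (e v)) := by
        rw [image_image]; simp [Function.comp_def]
    _ ≤ _ := by gcongr; exact card_image_le_numEdgeComps G hφ hs

end CyclicColoring

/-- For every `n ≥ 2`, `f_{n-1}(K_n) = ⌊n/2⌋`: there exists an
`(n-1)`-edge-coloring of `K_n` in which every color class has at least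
`⌊n/2⌋` components, and no coloring can do better. -/
theorem f_nsub1_Kn (n : ℕ) (hn : 2 ≤ n) :
    fGraph n (n - 1) = n / 2 ∧
    (∃ c : Sym2 (Fin n) → Fin (n - 1), ∀ i : Fin (n - 1),
      n / 2 ≤ numEdgeComps (colorClass c i)) := by
  have : NeZero (n - 1) := ⟨by omega⟩
  have hcard : Fintype.card (Option (ZMod (n - 1))) = n := by simp; omega
  let e := (Fintype.equivFinOfCardEq hcard).symm
  let f := (ZMod.finEquiv (n - 1)).toEquiv
  have hc : ∀ i, n / 2 ≤ numEdgeComps (colorClass (cyclicColoring e f) i) := fun i => by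
    have := card_le_two_mul_numEdgeComps_cyclicColoring e f i
    rw [ZMod.card] at this
    omega
  exact ⟨fGraph_eq_half hn hc, _, hc⟩
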